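/- Let H be a graded connected Hopf algebra over ℂ and φ ∈ G_A a local character. If x ∈ H_d is a primitive homogeneous element of degree d ≥ 1, then φ(x) has a pole of order at most one: λ·φ(x) ∈ A_+ = ℂ[[λ]]. The same holds for log(φ)(x); indeed log(φ)(x) = φ(x) for primitive x of positive degree. -/

import Mathlib

open scoped TensorProduct

set_option synthInstance.maxHeartbeats 1000000
set_option maxHeartbeats 1600000
set_option linter.unnecessarySeqFocus false

noncomputable section

/-- The algebra `A = ℂ((λ))` of formal Laurent series with finite pole part. -/
abbrev LS := LaurentSeries ℂ

/-- `ℂ`-scalars commute with multiplication of Laurent series. -/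
instance : SMulCommClass ℂ LS LS := by
  constructor
  intro c a b
  show c • (a * b) = a * (c • b)
  rw [← HahnSeries.single_zero_mul_eq_smul, ← HahnSeries.single_zero_mul_eq_smul]
  ring

/-- Scalar tower for `ℂ`-scalars and Laurent series. -/
instance : IsScalarTower ℂ LS LS := by
  constructor
  intro c a b
  show (c • a) * b = c • (a * b)
  rw [← HahnSeries.single_zero_mul_eq_smul, ← HahnSeries.single_zero_mul_eq_smul]
  ring

/-- `A₊ = ℂ[[λ]]`: the holomorphic part. -/
def Aplus (f : LS) : Prop := ∀ n : ℤ, n < 0 → f.coeff n = 0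

/-- `A₋ = λ⁻¹ℂ[λ⁻¹]`: the polar part. -/
def Aminus (f : LS) : Prop := ∀ n : ℤ, 0 ≤ n → f.coeff n = 0

/-- The formal variable `λ`. -/
def lam : LS := HahnSeries.single (1 : ℤ) (1 : ℂ)

/-- `λ^k` for `k : ℤ`. -/
def lamZ (k : ℤ) : LS := HahnSeries.single k (1 : ℂ)

/-- `e^{cλ} = Σ_k c^k λ^k / k!` as a Laurent series. -/
def expL (c : ℂ) : LS :=
  HahnSeries.ofPowerSeries ℤ ℂ (PowerSeries.mk fun k => c ^ k / (k.factorial : ℂ))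

section Hopf

variable {H : Type} [Ring H] [HopfAlgebra ℂ H]

/-- Convolution product of linear maps from a Hopf algebra to `A`. -/
def conv (f g : H →ₗ[ℂ] LS) : H →ₗ[ℂ] LS :=
  LinearMap.mul' ℂ LS ∘ₗ TensorProduct.map f g ∘ₗ Coalgebra.comul

/-- The unit `ε` of the convolution algebra. -/
def epsA : H →ₗ[ℂ] LS := LinearMap.toSpanSingleton ℂ LS 1 ∘ₗ Coalgebra.counit

/-- Characters: algebra morphisms `H → A` sending `1` to `1`. -/
def IsCharacter (φ : H →ₗ[ℂ] LS) : Prop :=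
  φ 1 = 1 ∧ ∀ x y : H, φ (x * y) = φ x * φ y

/-- The group inverse of a character: `φ⁻¹ = φ ∘ S`. -/
def charInv (φ : H →ₗ[ℂ] LS) : H →ₗ[ℂ] LS := φ ∘ₗ HopfAlgebra.antipode (R := ℂ)

/-- Infinitesimal characters: `Z(xy) = Z(x)ε(y) + ε(x)Z(y)`. -/
def IsInfChar (Z : H →ₗ[ℂ] LS) : Prop :=
  ∀ x y : H, Z (x * y) = Z x * epsA y + epsA x * Z y

/-- The Lie bracket `[Z,Z'] = Z⋆Z' − Z'⋆Z` on infinitesimal characters. -/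
def lieBr (Z W : H →ₗ[ℂ] LS) : H →ₗ[ℂ] LS := conv Z W - conv W Z

/-- The adjoint action `Ad(g)L = g⋆L⋆g⁻¹`. -/
def Adc (g L : H →ₗ[ℂ] LS) : H →ₗ[ℂ] LS := conv g (conv L (charInv g))

/-- Convolution powers `Z^{⋆k}`. -/
def convPow (Z : H →ₗ[ℂ] LS) : ℕ → (H →ₗ[ℂ] LS)
  | 0 => epsA
  | k + 1 => conv Z (convPow Z k)

/-- `E = exp(Z)`, the convolution exponential: for each `x ∈ H` the series
`Σ_k Z^{⋆k}(x)/k!` stabilizes (a finite sum by connectedness) with value `E(x)`. -/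
def IsConvExp (Z E : H →ₗ[ℂ] LS) : Prop :=
  ∀ x : H, ∃ N : ℕ, ∀ M : ℕ, N ≤ M →
    E x = ∑ k ∈ Finset.range M, ((k.factorial : ℂ))⁻¹ • convPow Z k x

/- ℂ-valued (scalar) versions, for `β`-functions. -/

/-- Convolution product of ℂ-valued linear maps on a Hopf algebra. -/
def convC (f g : H →ₗ[ℂ] ℂ) : H →ₗ[ℂ] ℂ :=
  LinearMap.mul' ℂ ℂ ∘ₗ TensorProduct.map f g ∘ₗ Coalgebra.comul

/-- ℂ-valued characters. -/
def IsCharacterC (φ : H →ₗ[ℂ] ℂ) : Prop :=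
  φ 1 = 1 ∧ ∀ x y : H, φ (x * y) = φ x * φ y

/-- The group inverse of a ℂ-valued character. -/
def charInvC (φ : H →ₗ[ℂ] ℂ) : H →ₗ[ℂ] ℂ := φ ∘ₗ HopfAlgebra.antipode (R := ℂ)

/-- ℂ-valued infinitesimal characters. -/
def IsInfCharC (Z : H →ₗ[ℂ] ℂ) : Prop :=
  ∀ x y : H, Z (x * y) = Z x * Coalgebra.counit y + Coalgebra.counit x * Z y

end Hopf

section Graded

variable {H : Type} [Ring H] [HopfAlgebra ℂ H]
variable (𝒜 : ℕ → Submodule ℂ H) [GradedAlgebra 𝒜]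

/-- Connectedness: `H₀ = ℂ·1`. -/
def IsConnectedGrading : Prop := 𝒜 0 = Submodule.span ℂ {(1 : H)}

/-- The coproduct is grading-preserving: `Δ(H_n) ⊆ Σ_{i+j=n} H_i ⊗ H_j`. -/
def ComulGraded : Prop :=
  ∀ n : ℕ, ∀ x ∈ 𝒜 n, Coalgebra.comul (R := ℂ) x ∈
    ⨆ p : {p : ℕ × ℕ // p.1 + p.2 = n},
      LinearMap.range (TensorProduct.map ((𝒜 p.1.1).subtype) ((𝒜 p.1.2).subtype))

/-- The counit is grading-preserving: it vanishes in positive degrees. -/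
def CounitGraded : Prop := ∀ n : ℕ, 0 < n → ∀ x ∈ 𝒜 n, Coalgebra.counit (R := ℂ) x = 0

/-- The antipode is grading-preserving. -/
def AntipodeGraded : Prop := ∀ n : ℕ, ∀ x ∈ 𝒜 n, HopfAlgebra.antipode (R := ℂ) x ∈ 𝒜 n

/-- The grading biderivation `Y(x) = n·x` for `x ∈ H_n`. -/
def Ymap : H →ₗ[ℂ] H :=
  (DFinsupp.lsum ℕ fun n : ℕ => ((n : ℂ) • (𝒜 n).subtype)) ∘ₗ
    (DirectSum.decomposeLinearEquiv 𝒜).toLinearMap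

/-- `φ^t`, defined by `φ^t(x) = e^{tλn}·φ(x)` for homogeneous `x` of degree `n`. -/
def charScale (t : ℂ) (φ : H →ₗ[ℂ] LS) : H →ₗ[ℂ] LS :=
  (DFinsupp.lsum ℕ fun n : ℕ => (expL (t * (n : ℂ)) • (φ ∘ₗ (𝒜 n).subtype))) ∘ₗ
    (DirectSum.decomposeLinearEquiv 𝒜).toLinearMap

/-- `R̃(φ) = φ^{-1} ⋆ (φ ∘ Y)`. -/
def Rtilde (φ : H →ₗ[ℂ] LS) : H →ₗ[ℂ] LS := conv (charInv φ) (φ ∘ₗ Ymap 𝒜)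

/-- `(φm, φp)` is the Birkhoff decomposition of `φ`: `φ = φm^{-1} ⋆ φp`, i.e. `φm ⋆ φ = φp`,
with `φp` holomorphic and `φm − ε` a pure pole part. -/
def IsBirkhoff (φ φm φp : H →ₗ[ℂ] LS) : Prop :=
  IsCharacter φm ∧ IsCharacter φp ∧ (∀ x, Aplus (φp x)) ∧
    (∀ x, Aminus (φm x - epsA x)) ∧ conv φm φ = φp

/-- A character is local if the negative Birkhoff part of `φ^t` is independent of `t`. -/
def IsLocal (φ : H →ₗ[ℂ] LS) : Prop :=
  IsCharacter φ ∧ ∃ φm : H →ₗ[ℂ] LS, ∀ t : ℂ, ∃ φp, IsBirkhoff (charScale 𝒜 t φ) φm φp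

/-- `B = tildeβ_φ`:  `B(x) = (d/dt)|_{t=0} (φ^{-1} ⋆ φ^t)(x)`, coefficientwise. -/
def HasTildeBeta (φ B : H →ₗ[ℂ] LS) : Prop :=
  ∀ (x : H) (n : ℤ),
    HasDerivAt (fun t : ℂ => ((conv (charInv φ) (charScale 𝒜 t φ)) x).coeff n)
      ((B x).coeff n) 0

/-- The `β`-function `β_φ = −(Res φ₋) ∘ Y` of a local character whose negative
Birkhoff part is `φm`. -/
def betaFn (φm : H →ₗ[ℂ] LS) : H → ℂ := fun x => -((φm (Ymap 𝒜 x)).coeff (-1))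

end Graded

section Curves

variable {H : Type} [Ring H] [HopfAlgebra ℂ H]

/-- Pointwise (coefficientwise) derivative of a curve of maps `H → A`. -/
def HasDerivAtF (F : ℝ → (H →ₗ[ℂ] LS)) (F' : H →ₗ[ℂ] LS) (t : ℝ) : Prop :=
  ∀ (x : H) (n : ℤ), HasDerivAt (fun s : ℝ => ((F s) x).coeff n) ((F' x).coeff n) t

/-- Pointwise differentiability of a curve of maps `H → A`. -/
def PointwiseDifferentiable (F : ℝ → (H →ₗ[ℂ] LS)) : Prop :=
  ∀ (x : H) (n : ℤ), Differentiable ℝ (fun s : ℝ => ((F s) x).coeff n)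

end Curves

/-- The operator `R = P₊ − P₋` on Laurent series. -/
def Rop : LS →ₗ[ℂ] LS where
  toFun f :=
    { coeff := fun n => if n < 0 then -f.coeff n else f.coeff n
      isPWO_support' := f.isPWO_support'.mono (by
        intro n hn
        simp only [Function.mem_support] at hn ⊢
        by_cases h : n < 0 <;> simp_all) }
  map_add' f g := by
    ext n
    by_cases h : n < 0 <;> simp [h] <;> ring
  map_smul' c f := by
    ext n
    by_cases h : n < 0 <;> simp [h]

/-!
For primitive `x ∈ H_d`, the Birkhoff factor `(φ^t)_+ = φ_- ⋆ φ^t` takes at `x` the value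
`φ_-(x) + e^{tdλ} φ(x) ∈ ℂ[[λ]]`, where locality makes `φ_-(x)` independent of `t`. Subtracting the
values at `t = 0` and `t = 1` gives `(e^{dλ} - 1) φ(x) ∈ ℂ[[λ]]`, and `e^{dλ} - 1` has order exactly
one, like `λ`.

If `exp(Z) = φ`, the exponential series at `1` is `Σ Z(1)^k / k!`; it can only stabilise if
`Z(1)` is nilpotent, hence zero. Then `Z^{⋆k}(x) = 0` for `k ≠ 1` on primitive `x`, since
`ε(x) = 0`, so `φ(x) = Z(x)`.
-/

def IsPrimitive (R : Type*) {A : Type*} [CommSemiring R] [Semiring A] [Bialgebra R A] (x : A) :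
    Prop :=
  Coalgebra.comul (R := R) x = x ⊗ₜ[R] (1 : A) + (1 : A) ⊗ₜ[R] x

theorem IsPrimitive.counit_eq_zero {R A : Type*} [CommRing R] [Ring A] [Bialgebra R A] {x : A}
    (hx : IsPrimitive R x) : Coalgebra.counit (R := R) x = 0 := by
  have h := Coalgebra.lTensor_counit_comul (R := R) x
  rw [hx, map_add, LinearMap.lTensor_tmul, LinearMap.lTensor_tmul, Bialgebra.counit_one,
    add_eq_left] at h
  have h' := congrArg (TensorProduct.rid R A) h
  rw [TensorProduct.rid_tmul, map_zero, ← Algebra.algebraMap_eq_smul_one] at h'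
  exact Bialgebra.algebraMap_injective A (h'.trans (map_zero _).symm)

section LaurentSeries

theorem aplus_iff_zero_le_orderTop (f : LS) : Aplus f ↔ 0 ≤ f.orderTop := by
  rw [HahnSeries.le_orderTop_iff_forall]
  exact forall_congr' fun n => by norm_cast

theorem Aplus.sub {f g : LS} (hf : Aplus f) (hg : Aplus g) : Aplus (f - g) := fun n hn => by
  rw [HahnSeries.coeff_sub, hf n hn, hg n hn, sub_zero]

theorem aplus_mul_iff_of_orderTop_eq {g g' : LS} (h : g.orderTop = g'.orderTop) (f : LS) :
    Aplus (g * f) ↔ Aplus (g' * f) := by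
  rw [aplus_iff_zero_le_orderTop, aplus_iff_zero_le_orderTop, HahnSeries.orderTop_mul,
    HahnSeries.orderTop_mul, h]

theorem orderTop_lam : lam.orderTop = 1 := HahnSeries.orderTop_single one_ne_zero

theorem expL_coeff_natCast (c : ℂ) (n : ℕ) : (expL c).coeff n = c ^ n / n.factorial := by
  simp [expL]

theorem expL_coeff_of_neg (c : ℂ) {n : ℤ} (hn : n < 0) : (expL c).coeff n = 0 := by
  rw [expL, HahnSeries.ofPowerSeries_apply]
  refine HahnSeries.embDomain_of_notMem_range ?_
  rintro ⟨m, hm⟩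
  have : (m : ℤ) = n := hm
  omega

theorem expL_zero : expL 0 = 1 := by
  have : (PowerSeries.mk fun k => (0 : ℂ) ^ k / (k.factorial : ℂ)) = 1 := by
    ext k
    cases k <;> simp [PowerSeries.coeff_one]
  rw [expL, this, map_one]

theorem orderTop_expL_sub_one {c : ℂ} (hc : c ≠ 0) : (expL c - 1).orderTop = 1 := by
  refine le_antisymm (HahnSeries.orderTop_le_of_coeff_ne_zero ?_)
    (HahnSeries.le_orderTop_iff_forall.mpr fun n hn => ?_)
  · have h1 : (expL c).coeff 1 = c := by simpa using expL_coeff_natCast c 1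
    simpa [HahnSeries.coeff_one, h1] using hc
  · have hn : n < 0 ∨ n = 0 := by norm_cast at hn; omega
    rcases hn with hn | rfl
    · simp [expL_coeff_of_neg c hn, HahnSeries.coeff_one, hn.ne]
    · simpa [HahnSeries.coeff_one, sub_eq_zero] using expL_coeff_natCast c 0

end LaurentSeries

section Convolution

variable {H : Type} [Ring H] [HopfAlgebra ℂ H]

theorem conv_apply_one (f g : H →ₗ[ℂ] LS) : conv f g 1 = f 1 * g 1 := by
  simp [conv, Bialgebra.comul_one, Algebra.TensorProduct.one_def]

theorem conv_apply_of_isPrimitive (f g : H →ₗ[ℂ] LS) {x : H} (hx : IsPrimitive ℂ x) :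
    conv f g x = f x * g 1 + f 1 * g x := by
  simp [conv, show Coalgebra.comul (R := ℂ) x = _ from hx]

theorem convPow_apply_one (Z : H →ₗ[ℂ] LS) (k : ℕ) : convPow Z k 1 = Z 1 ^ k := by
  induction k with
  | zero => simp [convPow, epsA]
  | succ k ih => rw [convPow, conv_apply_one, ih, pow_succ']

theorem convPow_apply_of_isPrimitive {Z : H →ₗ[ℂ] LS} (hZ : Z 1 = 0) {x : H}
    (hx : IsPrimitive ℂ x) (k : ℕ) : convPow Z k x = if k = 1 then Z x else 0 := by
  rcases k with _ | _ | k
  · simp [convPow, epsA, hx.counit_eq_zero]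
  · simp [convPow, conv_apply_of_isPrimitive _ _ hx, epsA, hx.counit_eq_zero, hZ]
  · simp [convPow, conv_apply_of_isPrimitive _ _ hx, conv_apply_one, hZ]

theorem IsConvExp.apply_one_eq_zero {Z E : H →ₗ[ℂ] LS} (hZ : IsConvExp Z E) : Z 1 = 0 := by
  obtain ⟨N, hN⟩ := hZ 1
  have hlast : ((N + 1).factorial : ℂ)⁻¹ • Z 1 ^ (N + 1) = 0 := by
    have h := hN (N + 2) (by omega)
    rw [Finset.sum_range_succ, ← hN (N + 1) (by omega), left_eq_add, convPow_apply_one] at h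
    exact h
  have hfac : ((N + 1).factorial : ℂ)⁻¹ ≠ 0 :=
    inv_ne_zero (by exact_mod_cast (N + 1).factorial_ne_zero)
  exact pow_eq_zero_iff N.succ_ne_zero |>.mp ((smul_eq_zero_iff_right hfac).mp hlast)

theorem IsConvExp.apply_of_isPrimitive {Z E : H →ₗ[ℂ] LS} (hZ : IsConvExp Z E) {x : H}
    (hx : IsPrimitive ℂ x) : E x = Z x := by
  obtain ⟨N, hN⟩ := hZ x
  simp [hN (N + 2) (by omega), convPow_apply_of_isPrimitive hZ.apply_one_eq_zero hx]

end Convolution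

section Locality

variable {H : Type} [Ring H] [HopfAlgebra ℂ H] (𝒜 : ℕ → Submodule ℂ H) [GradedAlgebra 𝒜]

theorem charScale_apply_of_mem (t : ℂ) (φ : H →ₗ[ℂ] LS) {n : ℕ} {x : H} (hx : x ∈ 𝒜 n) :
    charScale 𝒜 t φ x = expL (t * n) * φ x := by
  have hdec : (DirectSum.decompose 𝒜 x : DirectSum ℕ fun i => 𝒜 i)
      = DFinsupp.single n (⟨x, hx⟩ : 𝒜 n) := by
    rw [DirectSum.decompose_of_mem 𝒜 hx]
    rfl
  change DFinsupp.lsum ℕ (fun m : ℕ => expL (t * m) • (φ ∘ₗ (𝒜 m).subtype))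
    (DirectSum.decompose 𝒜 x) = _
  rw [hdec, DFinsupp.lsum_single]
  rfl

theorem charScale_apply_one (t : ℂ) {φ : H →ₗ[ℂ] LS} (hφ : φ 1 = 1) : charScale 𝒜 t φ 1 = 1 := by
  simp [charScale_apply_of_mem 𝒜 t φ (SetLike.one_mem_graded 𝒜), hφ, expL_zero]

variable {𝒜}

theorem IsLocal.aplus_lam_mul_apply_of_isPrimitive {φ : H →ₗ[ℂ] LS} (hφ : IsLocal 𝒜 φ)
    {d : ℕ} (hd : d ≠ 0) {x : H} (hxd : x ∈ 𝒜 d) (hx : IsPrimitive ℂ x) :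
    Aplus (lam * φ x) := by
  obtain ⟨⟨hφ1, -⟩, φm, hbirkhoff⟩ := hφ
  have hplus (t : ℂ) : Aplus (φm x + expL (t * d) * φ x) := by
    obtain ⟨φp, ⟨hφm1, -⟩, -, hφp, -, hconv⟩ := hbirkhoff t
    have h := hφp x
    rwa [← hconv, conv_apply_of_isPrimitive _ _ hx, charScale_apply_one 𝒜 t hφ1,
      charScale_apply_of_mem 𝒜 t φ hxd, hφm1, mul_one, one_mul] at h
  have hdiff : Aplus ((expL d - 1) * φ x) := by
    convert (hplus 1).sub (hplus 0) using 1
    rw [zero_mul, expL_zero, one_mul]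
    ring
  have horder : (expL d - 1).orderTop = lam.orderTop := by
    rw [orderTop_expL_sub_one (by exact_mod_cast hd), orderTop_lam]
  exact (aplus_mul_iff_of_orderTop_eq horder (φ x)).mp hdiff

end Locality

theorem local_char_pole_order_one_on_primitives_general
    {H : Type} [Ring H] [HopfAlgebra ℂ H]
    (𝒜 : ℕ → Submodule ℂ H) [GradedAlgebra 𝒜]
    (φ : H →ₗ[ℂ] LS) (hloc : IsLocal 𝒜 φ)
    (d : ℕ) (hd : 1 ≤ d) (x : H) (hx : x ∈ 𝒜 d)
    (hprim : Coalgebra.comul (R := ℂ) x = x ⊗ₜ[ℂ] (1 : H) + (1 : H) ⊗ₜ[ℂ] x) :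
    Aplus (lam * φ x) ∧
    ∀ Z : H →ₗ[ℂ] LS, IsConvExp Z φ → Z x = φ x ∧ Aplus (lam * Z x) := by
  have hpole := hloc.aplus_lam_mul_apply_of_isPrimitive (by omega) hx hprim
  refine ⟨hpole, fun Z hZ => ?_⟩
  have hZx : Z x = φ x := (hZ.apply_of_isPrimitive hprim).symm
  exact ⟨hZx, hZx ▸ hpole⟩

/-- **Lemma.** Let `φ` be a local character of a graded connected Hopf algebra
and `x ∈ H_d` a primitive homogeneous element of degree `d ≥ 1`.  Then `φ(x)`
has a pole of order at most one: `λ·φ(x) ∈ A₊ = ℂ[[λ]]`.  The same holds for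
`log(φ)(x)`; indeed `log(φ)(x) = φ(x)` for primitive `x` of positive degree
(`log φ`, the convolution logarithm, being the unique `Z` with
`exp(Z) = φ`). -/
theorem local_char_pole_order_one_on_primitives
    {H : Type} [Ring H] [HopfAlgebra ℂ H]
    (𝒜 : ℕ → Submodule ℂ H) [GradedAlgebra 𝒜]
    (hconn : IsConnectedGrading 𝒜) (hΔ : ComulGraded 𝒜)
    (hcounit : CounitGraded 𝒜) (hS : AntipodeGraded 𝒜)
    (φ : H →ₗ[ℂ] LS) (hloc : IsLocal 𝒜 φ)
    (d : ℕ) (hd : 1 ≤ d) (x : H) (hx : x ∈ 𝒜 d)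
    (hprim : Coalgebra.comul (R := ℂ) x = x ⊗ₜ[ℂ] (1 : H) + (1 : H) ⊗ₜ[ℂ] x) :
    Aplus (lam * φ x) ∧
    ∀ Z : H →ₗ[ℂ] LS, IsConvExp Z φ → Z x = φ x ∧ Aplus (lam * Z x) :=
  local_char_pole_order_one_on_primitives_general 𝒜 φ hloc d hd x hx hprim

end
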